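/- Let R be a commutative Noetherian ring, W a finitely generated R-module, and x = x_1,...,x_n a sequence of elements of R. Then for all i, the Koszul homology modules satisfy dim H_{i+1}(x; W) ≤ dim H_i(x; W), i.e., the support of H_{i+1}(x; W) is contained in the support of H_i(x; W). -/

import Mathlib

open Finset

variable (R : Type) [CommRing R] (W : Type) [AddCommGroup W] [Module R W]

/-- The `i`-th term of the Koszul complex of a sequence `x_1,…,x_n` with coefficients in `W`:
the free `W`-valued functions on the `i`-element subsets of `{1,…,n}` (corresponding to
`⋀^i R^n ⊗ W`). -/
def koszulTerm (n : ℕ) (i : ℕ) : Type :=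
  {s : Finset (Fin n) // s.card = i} → W

instance (n i : ℕ) : AddCommGroup (koszulTerm W n i) := Pi.addCommGroup

instance (n i : ℕ) : Module R (koszulTerm W n i) := Pi.module _ _ _

/-- The Koszul differential `K_{i+1} → K_i`:
`(d f)(s) = Σ_{a ∉ s} (-1)^{#{b ∈ s | b < a}} x_a • f (s ∪ {a})`. -/
noncomputable def koszulD (n : ℕ) (x : Fin n → R) (i : ℕ) :
    koszulTerm W n (i + 1) →ₗ[R] koszulTerm W n i where
  toFun f s := ∑ a ∈ (s.1)ᶜ.attach,
    ((-1 : ℤ) ^ ((s.1.filter (fun b => b < a.1)).card)) • x a.1 •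
      f ⟨insert a.1 s.1, by
        have ha : a.1 ∉ s.1 := Finset.mem_compl.mp a.2
        simp [Finset.card_insert_of_notMem ha, s.2]⟩
  map_add' f g := by
    funext s
    show _ = (_ : W) + _
    rw [← Finset.sum_add_distrib]
    refine Finset.sum_congr rfl fun a _ => ?_
    show _ • _ • ((f ⟨_, _⟩ : W) + g ⟨_, _⟩) = _
    rw [smul_add, smul_add]
  map_smul' c f := by
    funext s
    show _ = c • (∑ _ ∈ _, _ : W)
    rw [Finset.smul_sum]
    refine Finset.sum_congr rfl fun a _ => ?_
    show _ • _ • (c • f ⟨_, _⟩ : W) = _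
    rw [smul_comm _ c, smul_comm _ c]

/-- The full Koszul differential `D_i : K_i → K_{i-1}`, with `D_0 = 0`. -/
noncomputable def koszulFullD (n : ℕ) (x : Fin n → R) :
    ∀ i : ℕ, koszulTerm W n i →ₗ[R] koszulTerm W n (i - 1)
  | 0 => 0
  | (i + 1) => koszulD R W n x i

/-- The `i`-th Koszul homology `H_i(x; W) = ker D_i / im D_{i+1}`. -/
noncomputable def koszulHomology (n : ℕ) (x : Fin n → R) (i : ℕ) : Type :=
  ↥(LinearMap.ker (koszulFullD R W n x i)) ⧸
    Submodule.comap (LinearMap.ker (koszulFullD R W n x i)).subtype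
      (LinearMap.range (koszulFullD R W n x (i + 1)))

noncomputable instance (n : ℕ) (x : Fin n → R) (i : ℕ) :
    AddCommGroup (koszulHomology R W n x i) := by
  unfold koszulHomology; infer_instance

noncomputable instance (n : ℕ) (x : Fin n → R) (i : ℕ) :
    Module R (koszulHomology R W n x i) := by
  unfold koszulHomology; infer_instance

/-! Splitting off the first element, the Koszul complex of `x = (x₀, x')` is the mapping cone
of multiplication by `x₀` on the Koszul complex of `x'`. Consequently `x₀` annihilates `H(x)`,
`Ann H_i(x') · Ann H_{i+1}(x')` annihilates `H_{i+1}(x)`, and `Ann H_i(x)` annihilates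
`H_i(x') / x₀ H_i(x')`. For `p ∈ Supp H_{i+1}(x)`, the first two facts and induction on the length
of `x` give `x₀ ∈ p` and `p ∈ Supp H_i(x')`, hence `p ∈ Supp (H_i(x') / x₀ H_i(x'))` by Nakayama,
and the third fact puts `p` in `Supp H_i(x)`. The dimension inequality follows, the dimension of
a finite module being that of its support. -/

section ModuleFacts

variable {R : Type*} [CommRing R] {L M N : Type*} [AddCommGroup L] [Module R L]
  [AddCommGroup M] [Module R M] [AddCommGroup N] [Module R N]

open LinearMap in
theorem mem_annihilator_ker_quotient_range_iff (f : M →ₗ[R] N) (g : L →ₗ[R] M) (r : R) :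
    r ∈ Module.annihilator R (ker f ⧸ (range g).comap (ker f).subtype) ↔
      ∀ z, f z = 0 → r • z ∈ range g := by
  rw [Module.mem_annihilator]
  refine ⟨fun h z hz => ?_, fun h q => ?_⟩
  · have := h (Submodule.Quotient.mk ⟨z, hz⟩)
    rwa [← Submodule.Quotient.mk_smul, Submodule.Quotient.mk_eq_zero] at this
  · obtain ⟨⟨z, hz⟩, rfl⟩ := Submodule.Quotient.mk_surjective _ q
    rw [← Submodule.Quotient.mk_smul, Submodule.Quotient.mk_eq_zero]
    exact h z hz

open LinearMap Pointwise in
theorem mem_annihilator_quotSMulTop_ker_quotient_range (f : M →ₗ[R] N) (g : L →ₗ[R] M)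
    (c r : R) (h : ∀ z, f z = 0 → ∃ w, f w = 0 ∧ r • z - c • w ∈ range g) :
    r ∈ Module.annihilator R (QuotSMulTop c (ker f ⧸ (range g).comap (ker f).subtype)) := by
  rw [Module.mem_annihilator]
  intro q
  obtain ⟨q, rfl⟩ := Submodule.Quotient.mk_surjective _ q
  obtain ⟨⟨z, hz⟩, rfl⟩ := Submodule.Quotient.mk_surjective _ q
  obtain ⟨w, hw, hzw⟩ := h z hz
  have : r • Submodule.Quotient.mk ⟨z, hz⟩ =
      c • Submodule.Quotient.mk (p := (range g).comap (ker f).subtype) ⟨w, hw⟩ := by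
    rw [← Submodule.Quotient.mk_smul, ← Submodule.Quotient.mk_smul, Submodule.Quotient.eq]
    exact hzw
  rw [← Submodule.Quotient.mk_smul, Submodule.Quotient.mk_eq_zero, this]
  exact Submodule.smul_mem_pointwise_smul _ _ _ Submodule.mem_top

theorem Module.support_subset_of_annihilator_le [Module.Finite R M]
    (h : Module.annihilator R M ≤ Module.annihilator R N) :
    Module.support R N ⊆ Module.support R M := fun _ hp =>
  Module.mem_support_iff_of_finite.mpr (h.trans (Module.annihilator_le_of_mem_support hp))

theorem Module.supportDim_le_of_support_subset (h : Module.support R M ⊆ Module.support R N) :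
    Module.supportDim R M ≤ Module.supportDim R N :=
  Order.krullDim_le_of_strictMono (fun p => ⟨p.1, h p.2⟩) fun _ _ hlt => hlt

end ModuleFacts

namespace Finset

variable {n : ℕ}

theorem zero_notMem_map_succEmb (u : Finset (Fin n)) :
    (0 : Fin (n + 1)) ∉ u.map (Fin.succEmb n) := by
  simp [Fin.succ_ne_zero]

theorem succ_mem_map_succEmb {u : Finset (Fin n)} {c : Fin n} :
    c.succ ∈ u.map (Fin.succEmb n) ↔ c ∈ u := by
  simp

theorem insert_succ_map_succEmb (u : Finset (Fin n)) (c : Fin n) :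
    insert c.succ (u.map (Fin.succEmb n)) = (insert c u).map (Fin.succEmb n) :=
  (map_insert _ _ _).symm

theorem eq_map_succEmb_or_eq_insert_zero (s : Finset (Fin (n + 1))) :
    (∃ u : Finset (Fin n), s = u.map (Fin.succEmb n)) ∨
      ∃ u : Finset (Fin n), s = insert 0 (u.map (Fin.succEmb n)) := by
  set u := s.preimage Fin.succ (Fin.succ_injective n).injOn
  have hsucc (c : Fin n) : c.succ ∈ s ↔ c.succ ∈ u.map (Fin.succEmb n) := by
    rw [succ_mem_map_succEmb, mem_preimage]
  by_cases h0 : 0 ∈ s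
  · refine .inr ⟨u, ext fun b => b.cases ?_ fun c => ?_⟩
    · simp [h0]
    · rw [mem_insert, hsucc, or_iff_right (Fin.succ_ne_zero c)]
  · refine .inl ⟨u, ext fun b => b.cases ?_ hsucc⟩
    simp [h0]

theorem compl_map_succEmb (u : Finset (Fin n)) :
    (u.map (Fin.succEmb n))ᶜ = insert 0 (uᶜ.map (Fin.succEmb n)) := by
  ext b
  cases b using Fin.cases <;> simp [Fin.succ_ne_zero]

theorem compl_insert_zero_map_succEmb (u : Finset (Fin n)) :
    (insert 0 (u.map (Fin.succEmb n)))ᶜ = uᶜ.map (Fin.succEmb n) := by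
  ext b
  cases b using Fin.cases <;> simp [Fin.succ_ne_zero]

end Finset

namespace Koszul

variable {n : ℕ}

def sign (s : Finset (Fin n)) (a : Fin n) : ℤ :=
  (-1) ^ #(s.filter (· < a))

theorem sign_zero (s : Finset (Fin (n + 1))) : sign s 0 = 1 := by
  simp [sign]

theorem sign_map_succEmb (u : Finset (Fin n)) (c : Fin n) :
    sign (u.map (Fin.succEmb n)) c.succ = sign u c := by
  rw [sign, sign, Finset.filter_map, Finset.card_map]
  simp [Function.comp_def, Fin.succ_lt_succ_iff]

theorem sign_insert_zero_map_succEmb (u : Finset (Fin n)) (c : Fin n) :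
    sign (insert 0 (u.map (Fin.succEmb n))) c.succ = -sign u c := by
  rw [sign, Finset.filter_insert, if_pos (Fin.succ_pos c),
    Finset.card_insert_of_notMem fun h => zero_notMem_map_succEmb u (Finset.mem_filter.mp h).1,
    pow_succ, ← sign, sign_map_succEmb, mul_neg_one]

section Cone

variable {W : Type*}

noncomputable def cone (G H : Finset (Fin n) → W) (s : Finset (Fin (n + 1))) : W :=
  if 0 ∈ s then H (s.preimage Fin.succ (Fin.succ_injective n).injOn)
  else G (s.preimage Fin.succ (Fin.succ_injective n).injOn)

theorem cone_map_succEmb (G H : Finset (Fin n) → W) (u : Finset (Fin n)) :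
    cone G H (u.map (Fin.succEmb n)) = G u := by
  rw [cone, if_neg (zero_notMem_map_succEmb u)]
  congr 1
  ext c
  simp

theorem cone_insert_zero_map_succEmb (G H : Finset (Fin n) → W) (u : Finset (Fin n)) :
    cone G H (insert 0 (u.map (Fin.succEmb n))) = H u := by
  rw [cone, if_pos (Finset.mem_insert_self _ _)]
  congr 1
  ext c
  simp [Fin.succ_ne_zero]

theorem cone_inj {G H G' H' : Finset (Fin n) → W} :
    cone G H = cone G' H' ↔ G = G' ∧ H = H' := by
  refine ⟨fun h => ⟨funext fun u => ?_, funext fun u => ?_⟩, fun ⟨hG, hH⟩ => hG ▸ hH ▸ rfl⟩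
  · simpa only [cone_map_succEmb] using congrFun h (u.map (Fin.succEmb n))
  · simpa only [cone_insert_zero_map_succEmb] using congrFun h (insert 0 (u.map (Fin.succEmb n)))

theorem exists_eq_cone (F : Finset (Fin (n + 1)) → W) :
    ∃ G H : Finset (Fin n) → W, F = cone G H := by
  refine ⟨fun u => F (u.map (Fin.succEmb n)), fun u => F (insert 0 (u.map (Fin.succEmb n))),
    funext fun s => ?_⟩
  rcases eq_map_succEmb_or_eq_insert_zero s with ⟨u, rfl⟩ | ⟨u, rfl⟩
  · rw [cone_map_succEmb]
  · rw [cone_insert_zero_map_succEmb]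

end Cone

section Chains

variable {R : Type*} [CommRing R] {W : Type*} [AddCommGroup W] [Module R W]

-- Koszul chains of all degrees at once are functions on all subsets of `Fin n`; those of degree
-- `j` are the functions vanishing off the `j`-element subsets (`IsHomogeneous j`), which `ofTerm`
-- below identifies with `koszulTerm W n j`.
variable (W) in
def diff (x : Fin n → R) : (Finset (Fin n) → W) →ₗ[R] (Finset (Fin n) → W) where
  toFun F s := ∑ a ∈ sᶜ, sign s a • x a • F (insert a s)
  map_add' F G := by
    funext s
    simp only [Pi.add_apply, smul_add, Finset.sum_add_distrib]
  map_smul' r F := by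
    funext s
    simp only [Pi.smul_apply, RingHom.id_apply, Finset.smul_sum, smul_comm r]

theorem diff_apply (x : Fin n → R) (F : Finset (Fin n) → W) (s : Finset (Fin n)) :
    diff W x F s = ∑ a ∈ sᶜ, sign s a • x a • F (insert a s) := rfl

def IsHomogeneous (j : ℕ) (F : Finset (Fin n) → W) : Prop :=
  ∀ s, F s ≠ 0 → #s = j

variable (W) in
def KillsHomology (s : R) (x : Fin n → R) (j : ℕ) : Prop :=
  ∀ F : Finset (Fin n) → W, IsHomogeneous j F → diff W x F = 0 →
    ∃ G, IsHomogeneous (j + 1) G ∧ diff W x G = s • F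

theorem IsHomogeneous.eq_zero {j : ℕ} {F : Finset (Fin n) → W} (hF : IsHomogeneous j F)
    {s : Finset (Fin n)} (hs : #s ≠ j) : F s = 0 :=
  not_not.mp (mt (hF s) hs)

theorem isHomogeneous_zero (j : ℕ) : IsHomogeneous j (0 : Finset (Fin n) → W) :=
  fun _ h => absurd rfl h

theorem IsHomogeneous.smul {j : ℕ} {F : Finset (Fin n) → W} (hF : IsHomogeneous j F) (r : R) :
    IsHomogeneous j (r • F) :=
  fun s hs => hF s fun h => hs (by rw [Pi.smul_apply, h, smul_zero])

theorem IsHomogeneous.add {j : ℕ} {F G : Finset (Fin n) → W} (hF : IsHomogeneous j F)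
    (hG : IsHomogeneous j G) : IsHomogeneous j (F + G) := by
  intro s hs
  by_contra h
  exact hs (by rw [Pi.add_apply, hF.eq_zero h, hG.eq_zero h, add_zero])

theorem IsHomogeneous.neg {j : ℕ} {F : Finset (Fin n) → W} (hF : IsHomogeneous j F) :
    IsHomogeneous j (-F) :=
  fun s hs => hF s fun h => hs (by rw [Pi.neg_apply, h, neg_zero])

theorem diff_apply_eq_zero_of_isHomogeneous (x : Fin n → R) {j : ℕ} {F : Finset (Fin n) → W}
    (hF : IsHomogeneous j F) {s : Finset (Fin n)} (hs : #s + 1 ≠ j) : diff W x F s = 0 :=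
  Finset.sum_eq_zero fun a ha => by
    rw [hF.eq_zero (by rwa [Finset.card_insert_of_notMem (Finset.mem_compl.mp ha)]),
      smul_zero, smul_zero]

theorem cone_zero : cone (0 : Finset (Fin n) → W) 0 = 0 := by
  funext s
  simp only [cone, Pi.zero_apply, ite_self]

theorem smul_cone (r : R) (G H : Finset (Fin n) → W) : r • cone G H = cone (r • G) (r • H) := by
  funext s
  simp only [cone, Pi.smul_apply, smul_ite]

theorem isHomogeneous_cone_iff {j : ℕ} {G H : Finset (Fin n) → W} :
    IsHomogeneous j (cone G H) ↔ IsHomogeneous j G ∧ ∀ u, H u ≠ 0 → #u + 1 = j := by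
  refine ⟨fun h => ⟨fun u hu => ?_, fun u hu => ?_⟩, fun ⟨hG, hH⟩ s hs => ?_⟩
  · rw [← cone_map_succEmb G H] at hu
    simpa using h _ hu
  · rw [← cone_insert_zero_map_succEmb G H] at hu
    simpa [Finset.card_insert_of_notMem (zero_notMem_map_succEmb u)] using h _ hu
  · rcases eq_map_succEmb_or_eq_insert_zero s with ⟨u, rfl⟩ | ⟨u, rfl⟩
    · rw [cone_map_succEmb] at hs
      simpa using hG u hs
    · rw [cone_insert_zero_map_succEmb] at hs
      simpa [Finset.card_insert_of_notMem (zero_notMem_map_succEmb u)] using hH u hs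

theorem isHomogeneous_cone_succ_iff {j : ℕ} {G H : Finset (Fin n) → W} :
    IsHomogeneous (j + 1) (cone G H) ↔ IsHomogeneous (j + 1) G ∧ IsHomogeneous j H := by
  rw [isHomogeneous_cone_iff]
  simp only [IsHomogeneous, Nat.add_right_cancel_iff]

theorem diff_cone (x : Fin (n + 1) → R) (G H : Finset (Fin n) → W) :
    diff W x (cone G H) =
      cone (diff W (Fin.tail x) G + x 0 • H) (-diff W (Fin.tail x) H) := by
  funext s
  rcases eq_map_succEmb_or_eq_insert_zero s with ⟨u, rfl⟩ | ⟨u, rfl⟩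
  · rw [cone_map_succEmb, diff_apply, compl_map_succEmb,
      Finset.sum_insert (zero_notMem_map_succEmb _), Finset.sum_map, sign_zero, one_smul,
      cone_insert_zero_map_succEmb, add_comm, Pi.add_apply, Pi.smul_apply, diff_apply]
    congr 1
    refine Finset.sum_congr rfl fun c _ => ?_
    rw [Fin.coe_succEmb, sign_map_succEmb, insert_succ_map_succEmb,
      cone_map_succEmb]
    rfl
  · rw [cone_insert_zero_map_succEmb, diff_apply, compl_insert_zero_map_succEmb,
      Finset.sum_map, Pi.neg_apply, diff_apply, ← Finset.sum_neg_distrib]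
    refine Finset.sum_congr rfl fun c _ => ?_
    rw [Fin.coe_succEmb, sign_insert_zero_map_succEmb, Finset.insert_comm,
      insert_succ_map_succEmb, cone_insert_zero_map_succEmb, neg_smul]
    rfl

theorem killsHomology_head (x : Fin (n + 1) → R) (j : ℕ) : KillsHomology W (x 0) x j := by
  intro F hF hF0
  obtain ⟨G, H, rfl⟩ := exists_eq_cone F
  rw [diff_cone, ← cone_zero, cone_inj, neg_eq_zero] at hF0
  refine ⟨cone 0 G, isHomogeneous_cone_iff.mpr ⟨isHomogeneous_zero _, fun u hu => ?_⟩, ?_⟩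
  · rw [(isHomogeneous_cone_iff.mp hF).1 u hu]
  · rw [diff_cone, map_zero, zero_add, smul_cone, eq_neg_of_add_eq_zero_right hF0.1]

theorem KillsHomology.exists_homologous_head_smul {s : R} {x : Fin (n + 1) → R} {i : ℕ}
    (h : KillsHomology W s x i) {F : Finset (Fin n) → W} (hF : IsHomogeneous i F)
    (hF0 : diff W (Fin.tail x) F = 0) :
    ∃ H, IsHomogeneous i H ∧ diff W (Fin.tail x) H = 0 ∧
      ∃ G, IsHomogeneous (i + 1) G ∧ diff W (Fin.tail x) G = s • F - x 0 • H := by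
  obtain ⟨U, hU, hUF⟩ := h (cone F 0) (isHomogeneous_cone_iff.mpr ⟨hF, fun _ hu => absurd rfl hu⟩)
    (by rw [diff_cone, hF0, map_zero, smul_zero, zero_add, neg_zero, cone_zero])
  obtain ⟨G, H, rfl⟩ := exists_eq_cone U
  rw [diff_cone, smul_cone, smul_zero, cone_inj, neg_eq_zero] at hUF
  obtain ⟨hG, hH⟩ := isHomogeneous_cone_succ_iff.mp hU
  exact ⟨H, hH, hUF.2, G, hG, eq_sub_of_add_eq hUF.1⟩

theorem KillsHomology.mul_of_tail {s₁ s₂ : R} {x : Fin (n + 1) → R} {i : ℕ}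
    (h₁ : KillsHomology W s₁ (Fin.tail x) i) (h₂ : KillsHomology W s₂ (Fin.tail x) (i + 1)) :
    KillsHomology W (s₁ * s₂) x (i + 1) := by
  intro F hF hF0
  obtain ⟨G, H, rfl⟩ := exists_eq_cone F
  obtain ⟨hG, hH⟩ := isHomogeneous_cone_succ_iff.mp hF
  rw [diff_cone, ← cone_zero, cone_inj, neg_eq_zero] at hF0
  obtain ⟨U, hU, hUH⟩ := h₁ H hH hF0.2
  obtain ⟨V, hV, hVG⟩ := h₂ (s₁ • G + x 0 • U) ((hG.smul _).add (hU.smul _)) (by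
    rw [map_add, map_smul, map_smul, hUH, smul_comm (x 0), ← smul_add, hF0.1, smul_zero])
  refine ⟨cone V (-(s₂ • U)), isHomogeneous_cone_succ_iff.mpr ⟨hV, (hU.smul _).neg⟩, ?_⟩
  rw [diff_cone, hVG, map_neg, map_smul, hUH, neg_neg, smul_cone]
  congr 1 <;> module

theorem killsHomology_one_fin_zero (x : Fin 0 → R) (i : ℕ) : KillsHomology W 1 x (i + 1) := by
  intro F hF _
  refine ⟨0, isHomogeneous_zero _, ?_⟩
  rw [map_zero, one_smul]
  funext s
  have : #s = 0 := Finset.card_eq_zero.mpr (Subsingleton.elim _ _)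
  exact (hF.eq_zero (by omega)).symm

end Chains

section KoszulHomology

variable {R W}

variable (R) in
noncomputable def ofTerm {j : ℕ} : koszulTerm W n j →ₗ[R] (Finset (Fin n) → W) where
  toFun z s := if h : #s = j then z ⟨s, h⟩ else 0
  map_add' z w := by
    funext s
    by_cases h : #s = j
    · simp only [Pi.add_apply, dif_pos h]
      rfl
    · simp only [dif_neg h, Pi.add_apply, add_zero]
  map_smul' r z := by
    funext s
    by_cases h : #s = j
    · simp only [Pi.smul_apply, dif_pos h]
      rfl
    · simp only [dif_neg h, Pi.smul_apply, smul_zero]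

theorem ofTerm_apply_of_card_eq {j : ℕ} (z : koszulTerm W n j) {s : Finset (Fin n)}
    (h : #s = j) : ofTerm R z s = z ⟨s, h⟩ :=
  dif_pos h

theorem ofTerm_apply_of_card_ne {j : ℕ} (z : koszulTerm W n j) {s : Finset (Fin n)}
    (h : #s ≠ j) : ofTerm R z s = 0 :=
  dif_neg h

theorem isHomogeneous_ofTerm {j : ℕ} (z : koszulTerm W n j) : IsHomogeneous j (ofTerm R z) :=
  fun _ hs => by_contra fun h => hs (ofTerm_apply_of_card_ne z h)

theorem ofTerm_injective {j : ℕ} : Function.Injective (ofTerm R (W := W) (n := n) (j := j)) :=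
  fun z w h => funext fun s => by
    simpa only [ofTerm_apply_of_card_eq _ s.2] using congrFun h s.1

theorem IsHomogeneous.exists_ofTerm_eq {j : ℕ} {F : Finset (Fin n) → W}
    (hF : IsHomogeneous j F) : ∃ z : koszulTerm W n j, ofTerm R z = F := by
  refine ⟨fun s => F s.1, funext fun s => ?_⟩
  by_cases h : #s = j
  · exact ofTerm_apply_of_card_eq _ h
  · exact (ofTerm_apply_of_card_ne _ h).trans (hF.eq_zero h).symm

theorem diff_ofTerm (x : Fin n → R) {j : ℕ} (z : koszulTerm W n j) :
    diff W x (ofTerm R z) = ofTerm R (koszulFullD R W n x j z) := by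
  funext s
  cases j with
  | zero =>
    rw [diff_apply_eq_zero_of_isHomogeneous x (isHomogeneous_ofTerm z) (Nat.succ_ne_zero _)]
    exact (congrFun (map_zero (ofTerm R)) s).symm
  | succ i =>
    by_cases h : #s = i
    · rw [ofTerm_apply_of_card_eq _ h, diff_apply, ← Finset.sum_attach]
      refine Finset.sum_congr rfl fun a _ => ?_
      rw [ofTerm_apply_of_card_eq z
        (by rw [Finset.card_insert_of_notMem (Finset.mem_compl.mp a.2), h])]
      rfl
    · rw [diff_apply_eq_zero_of_isHomogeneous x (isHomogeneous_ofTerm z) (by omega)]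
      exact (ofTerm_apply_of_card_ne _ h).symm

theorem koszulFullD_eq_zero_iff (x : Fin n → R) {j : ℕ} (z : koszulTerm W n j) :
    koszulFullD R W n x j z = 0 ↔ diff W x (ofTerm R z) = 0 := by
  rw [diff_ofTerm, map_eq_zero_iff _ ofTerm_injective]

theorem mem_range_koszulFullD_iff (x : Fin n → R) {j : ℕ} (z : koszulTerm W n j) :
    z ∈ LinearMap.range (koszulFullD R W n x (j + 1)) ↔
      ∃ G, IsHomogeneous (j + 1) G ∧ diff W x G = ofTerm R z := by
  refine ⟨fun ⟨u, hu⟩ => ⟨ofTerm R u, isHomogeneous_ofTerm u, hu ▸ diff_ofTerm x u⟩,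
    fun ⟨G, hG, hGz⟩ => ?_⟩
  obtain ⟨u, rfl⟩ := hG.exists_ofTerm_eq (R := R)
  exact ⟨u, ofTerm_injective ((diff_ofTerm x u).symm.trans hGz)⟩

theorem mem_annihilator_koszulHomology_iff (s : R) (x : Fin n → R) (j : ℕ) :
    s ∈ Module.annihilator R (koszulHomology R W n x j) ↔ KillsHomology W s x j := by
  refine (mem_annihilator_ker_quotient_range_iff _ _ s).trans
    ⟨fun h F hF hF0 => ?_, fun h z hz => ?_⟩
  · obtain ⟨z, rfl⟩ := hF.exists_ofTerm_eq (R := R)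
    obtain ⟨G, hG, hGz⟩ :=
      (mem_range_koszulFullD_iff x _).mp (h z ((koszulFullD_eq_zero_iff x z).mpr hF0))
    exact ⟨G, hG, by rw [hGz, map_smul]⟩
  · obtain ⟨G, hG, hGz⟩ := h _ (isHomogeneous_ofTerm z) ((koszulFullD_eq_zero_iff x z).mp hz)
    exact (mem_range_koszulFullD_iff x _).mpr ⟨G, hG, by rw [hGz, map_smul]⟩

instance [IsNoetherianRing R] [Module.Finite R W] (x : Fin n → R) (j : ℕ) :
    Module.Finite R (koszulHomology R W n x j) := by
  have : Module.Finite R (koszulTerm W n j) := inferInstanceAs (Module.Finite R (_ → W))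
  have : Module.Finite R (LinearMap.ker (koszulFullD R W n x j)) :=
    Module.Finite.iff_fg.mpr (IsNoetherian.noetherian _)
  unfold koszulHomology
  infer_instance

theorem head_mem_annihilator_koszulHomology (x : Fin (n + 1) → R) (j : ℕ) :
    x 0 ∈ Module.annihilator R (koszulHomology R W (n + 1) x j) :=
  (mem_annihilator_koszulHomology_iff _ _ _).mpr (killsHomology_head x j)

theorem annihilator_mul_annihilator_tail_le (x : Fin (n + 1) → R) (i : ℕ) :
    Module.annihilator R (koszulHomology R W n (Fin.tail x) i) *
        Module.annihilator R (koszulHomology R W n (Fin.tail x) (i + 1)) ≤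
      Module.annihilator R (koszulHomology R W (n + 1) x (i + 1)) :=
  Submodule.mul_le.mpr fun _ h₁ _ h₂ => (mem_annihilator_koszulHomology_iff _ _ _).mpr <|
    ((mem_annihilator_koszulHomology_iff _ _ _).mp h₁).mul_of_tail
      ((mem_annihilator_koszulHomology_iff _ _ _).mp h₂)

theorem annihilator_le_annihilator_quotSMulTop_tail (x : Fin (n + 1) → R) (i : ℕ) :
    Module.annihilator R (koszulHomology R W (n + 1) x i) ≤
      Module.annihilator R (QuotSMulTop (x 0) (koszulHomology R W n (Fin.tail x) i)) := by
  intro s hs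
  refine mem_annihilator_quotSMulTop_ker_quotient_range _ _ _ _ fun z hz => ?_
  obtain ⟨H, hH, hH0, G, hG, hGH⟩ :=
    ((mem_annihilator_koszulHomology_iff s x i).mp hs).exists_homologous_head_smul
      (isHomogeneous_ofTerm z) ((koszulFullD_eq_zero_iff _ z).mp hz)
  obtain ⟨w, rfl⟩ := hH.exists_ofTerm_eq (R := R)
  exact ⟨w, (koszulFullD_eq_zero_iff _ w).mpr hH0,
    (mem_range_koszulFullD_iff _ _).mpr ⟨G, hG, by rw [hGH, map_sub, map_smul, map_smul]⟩⟩

theorem support_koszulHomology_succ_subset [IsNoetherianRing R] [Module.Finite R W] :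
    ∀ (n : ℕ) (x : Fin n → R) (i : ℕ),
      Module.support R (koszulHomology R W n x (i + 1)) ⊆
        Module.support R (koszulHomology R W n x i)
  | 0, x, i => fun p hp => by
    have h1 := Module.annihilator_le_of_mem_support hp
      ((mem_annihilator_koszulHomology_iff 1 x (i + 1)).mpr (killsHomology_one_fin_zero x i))
    exact ((Ideal.ne_top_iff_one _).mp p.2.ne_top h1).elim
  | n + 1, x, i => fun p hp => by
    have hann := Module.annihilator_le_of_mem_support hp
    have htail : p ∈ Module.support R (koszulHomology R W n (Fin.tail x) i) := by
      rcases p.2.mul_le.mp ((annihilator_mul_annihilator_tail_le x i).trans hann) with h | h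
      · exact Module.mem_support_iff_of_finite.mpr h
      · exact support_koszulHomology_succ_subset n (Fin.tail x) i
          (Module.mem_support_iff_of_finite.mpr h)
    refine Module.support_subset_of_annihilator_le
      (annihilator_le_annihilator_quotSMulTop_tail x i) ?_
    rw [Module.support_quotSMulTop]
    exact ⟨htail, Set.singleton_subset_iff.mpr
      (hann (head_mem_annihilator_koszulHomology x (i + 1)))⟩

end KoszulHomology

end Koszul

/-- For a commutative Noetherian ring `R`, a finitely generated `R`-module `W` and
a sequence `x = x_1,…,x_n` in `R`, the Koszul homologies satisfy
`dim H_{i+1}(x;W) ≤ dim H_i(x;W)`; indeed `Supp H_{i+1}(x;W) ⊆ Supp H_i(x;W)`. -/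
theorem koszul_homology_support_descending
    [IsNoetherianRing R] [Module.Finite R W] (n : ℕ) (x : Fin n → R) (i : ℕ) :
    Module.support R (koszulHomology R W n x (i + 1)) ⊆
      Module.support R (koszulHomology R W n x i) ∧
    ringKrullDim (R ⧸ Module.annihilator R (koszulHomology R W n x (i + 1))) ≤
      ringKrullDim (R ⧸ Module.annihilator R (koszulHomology R W n x i)) := by
  have hsupp := Koszul.support_koszulHomology_succ_subset (W := W) n x i
  refine ⟨hsupp, ?_⟩
  rw [← Module.supportDim_eq_ringKrullDim_quotient_annihilator,
    ← Module.supportDim_eq_ringKrullDim_quotient_annihilator]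
  exact Module.supportDim_le_of_support_subset hsupp
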